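/- arXiv:2209.07887 — 6 statements merged into one kernel-verified Lean document; each statement's English description precedes it below -/
import Mathlib

section
/- For non-negative integers $j$ and $k$, not both zero, $\sum_{i=0}^{k}(-1)^i\binom{k}{i}\binom{i/2}{j} = (-1)^j 2^{k-2j}\frac{k}{j}\binom{2j-k-1}{j-k}$, and the sum equals $1$ when $j=k=0$. -/
/-- Generalized binomial coefficient `x choose m` for `x : ℝ` and `m : ℤ`,
defined to be `0` for negative `m`. -/
noncomputable def gchooseZ (x : ℝ) (m : ℤ) : ℝ :=
  if 0 ≤ m then (∏ i ∈ Finset.range m.toNat, (x - i)) / (m.toNat).factorial else 0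

/-!
Write `f_j i = gchooseZ (i / 2) j`. Pascal's rule gives `f_j (i + 2) = f_j i + f_{j-1} i`, i.e.
`Δ² f_j = -2 Δ f_j + f_{j-1}` for the forward difference `Δ`, so the alternating sums
`S j k = (-1)^k Δ^k f_j 0` obey `S j (k + 2) = 2 S j (k + 1) + S (j - 1) k`. (This is the
recurrence of the coefficients of `u^k` for `u = 1 - √(1 + t)`, which satisfies `u² = 2u + t`.)

On the other side, `(k / j) C(2j-k-1, j-k) = C(2j-k-1, j-k) - C(2j-k-1, j-k-1)` (a ballot number).
The difference form is defined for all `j : ℤ`, equals `1` at `j = k = 0` without a special case,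
and satisfies the same recurrence by two applications of Pascal's rule. Both sides agree at
`k = 0` and at `k = 1`, the latter because `C(1/2, p+1) = (-1)^p Cat_p / 2^(2p+1)`.
-/

open Finset fwdDiff

lemma sum_range_neg_one_pow_mul_choose_mul {R : Type*} [CommRing R] (f : ℕ → R) (k : ℕ) :
    ∑ i ∈ range (k + 1), (-1) ^ i * k.choose i * f i = (-1) ^ k * Δ_[1] ^[k] f 0 := by
  rw [fwdDiff_iter_eq_sum_shift, mul_sum]
  refine sum_congr rfl fun i hi => ?_
  obtain ⟨d, rfl⟩ := Nat.exists_eq_add_of_le (Nat.lt_succ_iff.mp (mem_range.mp hi))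
  rw [zsmul_eq_mul, Nat.add_sub_cancel_left, zero_add, smul_eq_mul, mul_one]
  push_cast
  have hsq : ((-1 : R) ^ d) ^ 2 = 1 := by rw [← pow_mul, mul_comm, pow_mul, neg_one_sq, one_pow]
  linear_combination (-(-1 : R) ^ i * (i + d).choose i * f i) * hsq

lemma fwdDiff_iter_add_two_of_add_two {G : Type*} [AddCommGroup G] {f g : ℕ → G}
    (hfg : ∀ i, f (i + 2) = f i + g i) (k : ℕ) :
    Δ_[1] ^[k + 2] f = (-2 : ℤ) • Δ_[1] ^[k + 1] f + Δ_[1] ^[k] g := by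
  have h₂ : Δ_[1] ^[2] f = (-2 : ℤ) • Δ_[1] f + g := by
    funext i
    simp only [Function.iterate_succ_apply, Function.iterate_zero_apply, fwdDiff, Pi.add_apply,
      Pi.smul_apply, add_assoc, one_add_one_eq_two, hfg]
    abel
  rw [Function.iterate_add_apply, h₂, fwdDiff_iter_add, fwdDiff_iter_const_smul,
    ← Function.iterate_succ_apply]

lemma eq_of_same_recurrence {a b : ℤ → ℕ → ℝ}
    (ha : ∀ j k, a j (k + 2) = 2 * a j (k + 1) + a (j - 1) k)
    (hb : ∀ j k, b j (k + 2) = 2 * b j (k + 1) + b (j - 1) k)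
    (h₀ : ∀ j, a j 0 = b j 0) (h₁ : ∀ j, a j 1 = b j 1) : a = b := by
  suffices ∀ k, (∀ j, a j k = b j k) ∧ ∀ j, a j (k + 1) = b j (k + 1) from
    funext fun j => funext fun k => (this k).1 j
  intro k
  induction k with
  | zero => exact ⟨h₀, h₁⟩
  | succ k ih => exact ⟨ih.2, fun j => by rw [ha, hb, ih.1, ih.2]⟩

lemma gchooseZ_of_neg (x : ℝ) {m : ℤ} (hm : m < 0) : gchooseZ x m = 0 := by
  simp [gchooseZ, not_le.mpr hm]

lemma gchooseZ_natCast (x : ℝ) (n : ℕ) : gchooseZ x n = Ring.choose x n := by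
  rw [Ring.choose_eq_smul, gchooseZ, if_pos (Int.natCast_nonneg n), Int.toNat_natCast,
    ← descPochhammer_eval_eq_prod_range, ← Polynomial.aeval_eq_smeval, Polynomial.aeval_def,
    ← Polynomial.eval_map, descPochhammer_map, smul_eq_mul, div_eq_inv_mul]

lemma gchooseZ_zero_right (x : ℝ) : gchooseZ x 0 = 1 := by
  simp [gchooseZ]

lemma gchooseZ_natCast_natCast (a b : ℕ) : gchooseZ a b = a.choose b := by
  rw [gchooseZ_natCast, Ring.choose_natCast]

lemma gchooseZ_add_one (x : ℝ) (m : ℤ) :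
    gchooseZ (x + 1) m = gchooseZ x m + gchooseZ x (m - 1) := by
  rcases lt_or_ge m 0 with hm | hm
  · rw [gchooseZ_of_neg _ hm, gchooseZ_of_neg _ hm, gchooseZ_of_neg _ (by omega), add_zero]
  lift m to ℕ using hm
  cases m with
  | zero => simp [gchooseZ_zero_right, gchooseZ_of_neg]
  | succ n =>
    rw [Nat.cast_succ, add_sub_cancel_right, ← Nat.cast_succ, gchooseZ_natCast, gchooseZ_natCast,
      gchooseZ_natCast, Ring.choose_succ_succ, add_comm]

lemma gchooseZ_zero_left (m : ℤ) : gchooseZ 0 m = if m = 0 then 1 else 0 := by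
  rcases lt_or_ge m 0 with hm | hm
  · rw [gchooseZ_of_neg _ hm, if_neg hm.ne]
  lift m to ℕ using hm
  cases m with
  | zero => simp [gchooseZ_zero_right]
  | succ n =>
    rw [gchooseZ_natCast, Ring.choose_zero_succ, if_neg (by omega)]

lemma gchooseZ_succ (x : ℝ) (n : ℕ) :
    gchooseZ x (n + 1) = gchooseZ x n * (x - n) / (n + 1) := by
  simp only [gchooseZ, Int.natCast_nonneg, if_true, Int.toNat_natCast, ← Nat.cast_succ,
    prod_range_succ, Nat.factorial_succ]
  push_cast
  field_simp

lemma gchooseZ_half_succ (p : ℕ) :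
    gchooseZ (1 / 2) (p + 1) = (-1) ^ p * p.centralBinom / ((p + 1) * 2 ^ (2 * p + 1)) := by
  induction p with
  | zero => simpa [gchooseZ_zero_right] using gchooseZ_succ (1 / 2) 0
  | succ p ih =>
    have hcb : ((p : ℝ) + 1) * (p + 1).centralBinom = 2 * (2 * p + 1) * p.centralBinom := by
      exact_mod_cast Nat.succ_mul_centralBinom_succ p
    rw [gchooseZ_succ]
    push_cast
    rw [ih]
    field_simp
    linear_combination (-1) ^ p * 2 ^ (2 * p + 2) * hcb

noncomputable def halfChooseAltSum (j : ℤ) (k : ℕ) : ℝ :=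
  ∑ i ∈ range (k + 1), (-1) ^ i * k.choose i * gchooseZ ((i : ℝ) / 2) j

lemma halfChooseAltSum_add_two (j : ℤ) (k : ℕ) :
    halfChooseAltSum j (k + 2) = 2 * halfChooseAltSum j (k + 1) + halfChooseAltSum (j - 1) k := by
  have hshift : ∀ i : ℕ, gchooseZ (((i + 2 : ℕ) : ℝ) / 2) j =
      gchooseZ ((i : ℝ) / 2) j + gchooseZ ((i : ℝ) / 2) (j - 1) := fun i => by
    rw [← gchooseZ_add_one]; push_cast; ring_nf
  simp only [halfChooseAltSum, sum_range_neg_one_pow_mul_choose_mul,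
    fwdDiff_iter_add_two_of_add_two (f := fun i : ℕ => gchooseZ ((i : ℝ) / 2) j) hshift]
  rw [Pi.add_apply, Pi.smul_apply, zsmul_eq_mul]
  push_cast
  ring

lemma halfChooseAltSum_zero (j : ℤ) : halfChooseAltSum j 0 = gchooseZ 0 j := by
  simp [halfChooseAltSum]

lemma halfChooseAltSum_one (j : ℤ) :
    halfChooseAltSum j 1 = gchooseZ 0 j - gchooseZ (1 / 2) j := by
  simp [halfChooseAltSum, sum_range_succ, sub_eq_add_neg]

lemma gchooseZ_sub_gchooseZ_sub_one (j k : ℕ) (hjk : j ≠ 0 ∨ k ≠ 0) :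
    gchooseZ ((2 * (j : ℤ) - k - 1 : ℤ) : ℝ) ((j : ℤ) - k) -
        gchooseZ ((2 * (j : ℤ) - k - 1 : ℤ) : ℝ) ((j : ℤ) - k - 1) =
      (k / j) * gchooseZ ((2 * (j : ℤ) - k - 1 : ℤ) : ℝ) ((j : ℤ) - k) := by
  rcases lt_or_ge j k with hlt | hle
  · simp [gchooseZ_of_neg, show (j : ℤ) - k < 0 by omega, show (j : ℤ) - k - 1 < 0 by omega]
  obtain ⟨a, rfl⟩ := Nat.exists_eq_add_of_le hle
  cases a with
  | zero =>
    have hk : (k : ℝ) ≠ 0 := by simpa using hjk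
    simp [gchooseZ_zero_right, gchooseZ_of_neg, hk]
  | succ b =>
    have hn : 2 * ((k + (b + 1) : ℕ) : ℤ) - k - 1 = ((k + 2 * b + 1 : ℕ) : ℤ) := by
      push_cast; ring
    rw [hn, Int.cast_natCast,
      show ((k + (b + 1) : ℕ) : ℤ) - k = ((b + 1 : ℕ) : ℤ) by push_cast; ring,
      show ((b + 1 : ℕ) : ℤ) - 1 = (b : ℤ) by push_cast; ring,
      gchooseZ_natCast_natCast, gchooseZ_natCast_natCast]
    have hratio := Nat.choose_succ_right_eq (k + 2 * b + 1) b
    rw [show k + 2 * b + 1 - b = k + (b + 1) by omega] at hratio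
    have hratio' : ((k + 2 * b + 1).choose (b + 1) : ℝ) * (b + 1) =
        (k + 2 * b + 1).choose b * (k + (b + 1) : ℕ) := by exact_mod_cast hratio
    have hj : ((k + (b + 1) : ℕ) : ℝ) ≠ 0 := by positivity
    field_simp
    push_cast at hratio' ⊢
    linear_combination hratio'

noncomputable def ballotForm (j : ℤ) (k : ℕ) : ℝ :=
  (-1) ^ j * 2 ^ ((k : ℤ) - 2 * j) *
    (gchooseZ ((2 * j - k - 1 : ℤ) : ℝ) (j - k) -
      gchooseZ ((2 * j - k - 1 : ℤ) : ℝ) (j - k - 1))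

lemma ballotForm_add_two (j : ℤ) (k : ℕ) :
    ballotForm j (k + 2) = 2 * ballotForm j (k + 1) + ballotForm (j - 1) k := by
  simp only [ballotForm]
  set x : ℝ := ((2 * j - (k + 2 : ℕ) - 1 : ℤ) : ℝ)
  set a : ℤ := j - (k + 2 : ℕ)
  have hx₁ : ((2 * j - (k + 1 : ℕ) - 1 : ℤ) : ℝ) = x + 1 := by
    simp only [x]; push_cast; ring
  have hx₀ : ((2 * (j - 1) - k - 1 : ℤ) : ℝ) = x := by simp only [x]; push_cast; ring
  have ha₁ : j - (k + 1 : ℕ) = a + 1 := by simp only [a]; push_cast; ring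
  have ha₀ : j - 1 - k = a + 1 := by simp only [a]; push_cast; ring
  have hsign : (-1 : ℝ) ^ (j - 1) = -(-1) ^ j := by
    rw [zpow_sub_one₀ (by norm_num), inv_neg, inv_one, mul_neg_one]
  have hpow₁ :
      (2 : ℝ) ^ (((k + 2 : ℕ) : ℤ) - 2 * j) = 2 * 2 ^ (((k + 1 : ℕ) : ℤ) - 2 * j) := by
    rw [← zpow_one_add₀ (by norm_num)]; push_cast; ring_nf
  have hpow₀ : (2 : ℝ) ^ (((k + 2 : ℕ) : ℤ) - 2 * j) = 2 ^ ((k : ℤ) - 2 * (j - 1)) := by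
    push_cast; ring_nf
  rw [hx₁, hx₀, ha₁, ha₀, gchooseZ_add_one, gchooseZ_add_one, add_sub_cancel_right, hsign,
    ← hpow₀, hpow₁]
  ring

lemma ballotForm_zero (j : ℤ) : ballotForm j 0 = gchooseZ 0 j := by
  rcases lt_or_ge j 0 with hj | hj
  · simp [ballotForm, gchooseZ_of_neg, hj, show j - 1 < 0 by omega]
  lift j to ℕ using hj
  cases j with
  | zero => simp [ballotForm, gchooseZ_zero_right, gchooseZ_of_neg]
  | succ p =>
    have hsymm : ((2 * p + 1).choose (p + 1) : ℝ) = (2 * p + 1).choose p := by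
      exact_mod_cast Nat.choose_symm_half p
    rw [ballotForm, gchooseZ_zero_left, if_neg (by omega),
      show 2 * ((p + 1 : ℕ) : ℤ) - (0 : ℕ) - 1 = ((2 * p + 1 : ℕ) : ℤ) by push_cast; ring,
      show ((p + 1 : ℕ) : ℤ) - (0 : ℕ) = ((p + 1 : ℕ) : ℤ) by simp,
      show ((p + 1 : ℕ) : ℤ) - 1 = (p : ℤ) by push_cast; ring, Int.cast_natCast,
      gchooseZ_natCast_natCast, gchooseZ_natCast_natCast, hsymm, sub_self, mul_zero]

lemma ballotForm_one (j : ℤ) : ballotForm j 1 = gchooseZ 0 j - gchooseZ (1 / 2) j := by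
  rcases lt_or_ge j 0 with hj | hj
  · simp [ballotForm, gchooseZ_of_neg, hj, show j - 1 < 0 by omega, show j - 1 - 1 < 0 by omega]
  lift j to ℕ using hj
  cases j with
  | zero => simp [ballotForm, gchooseZ_zero_right, gchooseZ_of_neg]
  | succ p =>
    have hballot := gchooseZ_sub_gchooseZ_sub_one (p + 1) 1 (by simp)
    rw [show 2 * ((p + 1 : ℕ) : ℤ) - (1 : ℕ) - 1 = ((2 * p : ℕ) : ℤ) by push_cast; ring,
      show ((p + 1 : ℕ) : ℤ) - (1 : ℕ) = (p : ℤ) by push_cast; ring,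
      Int.cast_natCast] at hballot
    rw [ballotForm, Nat.cast_one,
      show 2 * ((p + 1 : ℕ) : ℤ) - 1 - 1 = ((2 * p : ℕ) : ℤ) by push_cast; ring,
      show ((p + 1 : ℕ) : ℤ) - 1 = (p : ℤ) by push_cast; ring, Int.cast_natCast, hballot,
      gchooseZ_natCast_natCast, ← Nat.centralBinom_eq_two_mul_choose,
      gchooseZ_zero_left, if_neg (by omega), Nat.cast_succ, gchooseZ_half_succ]
    rw [show (1 : ℤ) - 2 * (p + 1) = -((2 * p + 1 : ℕ) : ℤ) by push_cast; ring, zpow_neg,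
      show (p : ℤ) + 1 = ((p + 1 : ℕ) : ℤ) by push_cast; ring, zpow_natCast, zpow_natCast]
    push_cast
    field_simp
    ring

theorem stmt1 (j k : ℕ) :
    (∑ i ∈ Finset.range (k + 1), (-1 : ℝ) ^ i * (k.choose i : ℝ) * gchooseZ ((i : ℝ) / 2) j) =
      if j = 0 ∧ k = 0 then 1
      else (-1 : ℝ) ^ j * (2 : ℝ) ^ ((k : ℤ) - 2 * j) * ((k : ℝ) / j) *
        gchooseZ ((2 * (j : ℤ) - k - 1 : ℤ) : ℝ) ((j : ℤ) - k) := by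
  have hsum : halfChooseAltSum = ballotForm :=
    eq_of_same_recurrence halfChooseAltSum_add_two ballotForm_add_two
      (fun j => by rw [halfChooseAltSum_zero, ballotForm_zero])
      (fun j => by rw [halfChooseAltSum_one, ballotForm_one])
  change halfChooseAltSum j k = _
  rw [hsum, ballotForm, zpow_natCast]
  split_ifs with hjk
  · obtain ⟨rfl, rfl⟩ := hjk
    simp [gchooseZ_zero_right, gchooseZ_of_neg]
  · rw [gchooseZ_sub_gchooseZ_sub_one j k (by tauto)]
    ring
end

section
/- For integers $t \ge 1$ and $0 \le u \le t$, one has $\frac{1}{2t} \ge \frac{t\,(-t)_u\,(-1)^u}{(1+2t)(t+u)(t)_u} \ge \frac{1}{2t}\left(1 - \frac{u^2 + \tfrac{1}{2}}{t}\right)$. -/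
/-- The rising factorial (Pochhammer symbol) `(x)_n` for real `x`. -/
noncomputable def asc (x : ℝ) (n : ℕ) : ℝ := (ascPochhammer ℝ n).eval x

lemma asc_zero (x : ℝ) : asc x 0 = 1 := by simp [asc]

lemma asc_succ (x : ℝ) (n : ℕ) : asc x (n + 1) = asc x n * (x + n) := by
  simp [asc, ascPochhammer_succ_right]

lemma a_succ (t : ℝ) (u : ℕ) :
    asc (-t) (u + 1) * (-1) ^ (u + 1) = asc (-t) u * (-1) ^ u * (t - u) := by
  rw [asc_succ, pow_succ]; ring

lemma asc_pos (t : ℝ) (ht : 0 < t) (u : ℕ) : 0 < asc t u := by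
  induction u with
  | zero => simp [asc_zero]
  | succ n ih =>
    rw [asc_succ]
    have hn : (0:ℝ) ≤ n := Nat.cast_nonneg n
    exact mul_pos ih (by linarith)

lemma a_nonneg (t : ℕ) : ∀ u ≤ t, 0 ≤ asc (-(t:ℝ)) u * (-1) ^ u := by
  intro u hu
  induction u with
  | zero => simp [asc_zero]
  | succ n ih =>
    rw [a_succ]
    have hn : (n:ℝ) ≤ t := by exact_mod_cast Nat.le_of_succ_le hu
    exact mul_nonneg (ih (Nat.le_of_succ_le hu)) (by linarith)

lemma a_le_b (t : ℕ) (ht : 1 ≤ t) : ∀ u ≤ t, asc (-(t:ℝ)) u * (-1) ^ u ≤ asc (t:ℝ) u := by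
  intro u hu
  induction u with
  | zero => simp [asc_zero]
  | succ n ih =>
    rw [a_succ, asc_succ]
    have hn : (n:ℝ) ≤ t := by exact_mod_cast Nat.le_of_succ_le hu
    have hn0 : (0:ℝ) ≤ n := Nat.cast_nonneg n
    have h1 := a_nonneg t n (Nat.le_of_succ_le hu)
    have h2 := ih (Nat.le_of_succ_le hu)
    have h3 := asc_pos (t:ℝ) (by exact_mod_cast ht) n
    nlinarith

lemma key_low (t : ℕ) (ht : 1 ≤ t) : ∀ u ≤ t,
    ((t:ℝ) - u * (u - 1)) * asc (t:ℝ) u ≤ t * (asc (-(t:ℝ)) u * (-1) ^ u) := by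
  intro u hu
  induction u with
  | zero => simp [asc_zero]
  | succ n ih =>
    rw [a_succ, asc_succ]
    have hn : (n:ℝ) ≤ t := by exact_mod_cast Nat.le_of_succ_le hu
    have hn0 : (0:ℝ) ≤ n := Nat.cast_nonneg n
    have h3 := asc_pos (t:ℝ) (by exact_mod_cast ht) n
    have ih' := ih (Nat.le_of_succ_le hu)
    have h1 := mul_le_mul_of_nonneg_right ih' (by linarith : (0:ℝ) ≤ (t:ℝ) - n)
    have h2 : (0:ℝ) ≤ (n:ℝ)^3 * asc (t:ℝ) n := by positivity
    push_cast
    nlinarith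

theorem stmt2 (t u : ℕ) (ht : 1 ≤ t) (hu : u ≤ t) :
    1 / (2 * (t : ℝ)) ≥
      (t : ℝ) * asc (-(t : ℝ)) u * (-1) ^ u /
        ((1 + 2 * (t : ℝ)) * ((t : ℝ) + u) * asc (t : ℝ) u) ∧
    (t : ℝ) * asc (-(t : ℝ)) u * (-1) ^ u /
        ((1 + 2 * (t : ℝ)) * ((t : ℝ) + u) * asc (t : ℝ) u) ≥
      1 / (2 * (t : ℝ)) * (1 - ((u : ℝ) ^ 2 + 1 / 2) / t) := by
  have ht' : (1:ℝ) ≤ t := by exact_mod_cast ht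
  have hu' : (u:ℝ) ≤ t := by exact_mod_cast hu
  have hu0 : (0:ℝ) ≤ u := Nat.cast_nonneg u
  set a := asc (-(t:ℝ)) u * (-1) ^ u with ha_def
  set b := asc (t:ℝ) u with hb_def
  have hb : 0 < b := asc_pos (t:ℝ) (by linarith) u
  have hA : 0 ≤ a := a_nonneg t u hu
  have hC : a ≤ b := a_le_b t ht u hu
  have hD : ((t:ℝ) - u * (u - 1)) * b ≤ t * a := key_low t ht u hu
  have hden : 0 < (1 + 2 * (t:ℝ)) * ((t:ℝ) + u) * b := by positivity
  have h2t : (0:ℝ) < 2 * t := by linarith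
  have hnum : (t : ℝ) * asc (-(t : ℝ)) u * (-1) ^ u = (t:ℝ) * a := by
    rw [ha_def]; ring
  rw [hnum]
  constructor
  · rw [ge_iff_le, div_le_div_iff₀ hden h2t]
    nlinarith [mul_le_mul_of_nonneg_left hC (by positivity : (0:ℝ) ≤ 2 * (t:ℝ)^2),
      mul_nonneg (by positivity : (0:ℝ) ≤ (t:ℝ) + u + 2*t*u) hb.le]
  · have hrw : 1 / (2 * (t : ℝ)) * (1 - ((u : ℝ) ^ 2 + 1 / 2) / t)
        = ((t:ℝ) - u^2 - 1/2) / (2 * (t:ℝ)^2) := by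
      field_simp
      ring
    rw [ge_iff_le, hrw, div_le_div_iff₀ (by positivity) hden]
    have hfac : (0:ℝ) ≤ ((u:ℝ)^2 * t + u^3 + 2*t*u^3 + t/2 + u/2) * b := by positivity
    nlinarith [mul_le_mul_of_nonneg_left hD (by positivity : (0:ℝ) ≤ 2 * (t:ℝ)^2)]
end

section
/- For every positive integer $n$ and non-negative integer $k$, $0 < \sum_{t=k}^{\infty}\binom{-3/2}{t}\frac{(-1)^t}{(24n)^t} < 4\sqrt{2}\,\frac{\sqrt{k+1}}{(24n)^k}$. -/
/-- Generalized binomial coefficient `x choose m` for real `x`. -/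
noncomputable def gchoose (x : ℝ) (m : ℕ) : ℝ :=
  (∏ i ∈ Finset.range m, (x - i)) / m.factorial

noncomputable def cfun (m : ℕ) : ℝ :=
  (∏ i ∈ Finset.range m, ((i : ℝ) + 3 / 2)) / m.factorial

lemma cfun_pos (m : ℕ) : 0 < cfun m := by
  unfold cfun
  apply div_pos
  · exact Finset.prod_pos fun i _ => by positivity
  · exact_mod_cast m.factorial_pos

lemma gchoose_eq (m : ℕ) : gchoose (-3 / 2) m * (-1) ^ m = cfun m := by
  unfold gchoose cfun
  have h : ∏ i ∈ Finset.range m, ((-3 / 2 : ℝ) - i)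
      = (-1) ^ m * ∏ i ∈ Finset.range m, ((i : ℝ) + 3 / 2) := by
    induction m with
    | zero => simp
    | succ m ih => rw [Finset.prod_range_succ, ih, Finset.prod_range_succ]; ring
  have h1 : ((-1 : ℝ) ^ m) * ((-1 : ℝ) ^ m) = 1 := by
    rw [← pow_add, Even.neg_one_pow ⟨m, rfl⟩]
  rw [h, div_mul_eq_mul_div]
  congr 1
  rw [mul_comm, ← mul_assoc, h1, one_mul]

lemma cfun_succ (m : ℕ) : cfun (m + 1) = cfun m * (((m : ℝ) + 3 / 2) / ((m : ℝ) + 1)) := by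
  unfold cfun
  rw [Finset.prod_range_succ, Nat.factorial_succ]
  have hm : ((m : ℝ) + 1) ≠ 0 := by positivity
  have hf : ((m.factorial : ℝ)) ≠ 0 := by exact_mod_cast m.factorial_pos.ne'
  push_cast
  field_simp
  ring

lemma cfun_le (m : ℕ) : cfun m ≤ 2 / Real.sqrt 3 * Real.sqrt ((m : ℝ) + 3 / 4) := by
  induction m with
  | zero =>
    have h3 : (0 : ℝ) < Real.sqrt 3 := Real.sqrt_pos.mpr (by norm_num)
    have h4 : Real.sqrt ((0 : ℕ) + 3 / 4 : ℝ) = Real.sqrt 3 * (1 / 2) := by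
      rw [show ((0 : ℕ) + 3 / 4 : ℝ) = 3 * (1 / 2) ^ 2 by norm_num,
        Real.sqrt_mul (by norm_num), Real.sqrt_sq (by norm_num)]
    rw [h4]
    have : cfun 0 = 1 := by unfold cfun; simp
    rw [this]
    rw [div_mul_eq_mul_div, le_div_iff₀ h3]
    ring_nf
    nlinarith [h3]
  | succ m ih =>
    have hm1 : (0 : ℝ) < (m : ℝ) + 1 := by positivity
    have hrat : (0 : ℝ) < ((m : ℝ) + 3 / 2) / ((m : ℝ) + 1) := by positivity
    have hs : (0 : ℝ) ≤ Real.sqrt ((m : ℝ) + 3 / 4) := Real.sqrt_nonneg _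
    have step : Real.sqrt ((m : ℝ) + 3 / 4) * (((m : ℝ) + 3 / 2) / ((m : ℝ) + 1))
        ≤ Real.sqrt (((m : ℕ) + 1 : ℕ) + 3 / 4 : ℝ) := by
      rw [show ((((m : ℕ) + 1 : ℕ)) + 3 / 4 : ℝ) = (m : ℝ) + 7 / 4 by push_cast; ring]
      have hsq : (Real.sqrt ((m : ℝ) + 3 / 4)) ^ 2 = (m : ℝ) + 3 / 4 :=
        Real.sq_sqrt (by positivity)
      rw [← Real.sqrt_sq (le_of_lt (mul_pos (Real.sqrt_pos.mpr (by positivity)) hrat))]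
      apply Real.sqrt_le_sqrt
      rw [mul_pow, hsq, div_pow, mul_div_assoc' , div_le_iff₀ (by positivity : (0:ℝ) < ((m:ℝ)+1)^2)]
      nlinarith [sq_nonneg ((m : ℝ) + 1)]
    rw [cfun_succ]
    calc cfun m * (((m : ℝ) + 3 / 2) / ((m : ℝ) + 1))
        ≤ (2 / Real.sqrt 3 * Real.sqrt ((m : ℝ) + 3 / 4)) * (((m : ℝ) + 3 / 2) / ((m : ℝ) + 1)) :=
          mul_le_mul_of_nonneg_right ih (le_of_lt hrat)
      _ = 2 / Real.sqrt 3 * (Real.sqrt ((m : ℝ) + 3 / 4) * (((m : ℝ) + 3 / 2) / ((m : ℝ) + 1))) := by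
          ring
      _ ≤ 2 / Real.sqrt 3 * Real.sqrt (((m : ℕ) + 1 : ℕ) + 3 / 4 : ℝ) := by
          apply mul_le_mul_of_nonneg_left step
          positivity

theorem stmt13 (n k : ℕ) (hn : 1 ≤ n) :
    0 < (∑' j : ℕ, gchoose (-3 / 2) (j + k) * (-1 : ℝ) ^ (j + k) / (24 * (n : ℝ)) ^ (j + k)) ∧
    (∑' j : ℕ, gchoose (-3 / 2) (j + k) * (-1 : ℝ) ^ (j + k) / (24 * (n : ℝ)) ^ (j + k)) <
      4 * Real.sqrt 2 * (Real.sqrt ((k : ℝ) + 1) / (24 * (n : ℝ)) ^ k) := by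
  set r : ℝ := 24 * (n : ℝ) with hr_def
  have hn1 : (1 : ℝ) ≤ (n : ℝ) := by exact_mod_cast hn
  have hr : (24 : ℝ) ≤ r := by rw [hr_def]; nlinarith
  have hr0 : (0 : ℝ) < r := by linarith
  set f : ℕ → ℝ := fun m => cfun m / r ^ m with hf_def
  have hf_pos : ∀ m, 0 < f m := fun m => div_pos (cfun_pos m) (pow_pos hr0 m)
  have h_eq : ∀ j : ℕ, gchoose (-3 / 2) (j + k) * (-1 : ℝ) ^ (j + k) / r ^ (j + k) = f (j + k) := by
    intro j
    rw [hf_def]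
    simp only
    rw [← gchoose_eq (j + k)]
  rw [tsum_congr h_eq]
  -- geometric bound on terms
  have hstep : ∀ m : ℕ, f (m + 1) ≤ f m * (1 / 16) := by
    intro m
    have hm1 : (0 : ℝ) < (m : ℝ) + 1 := by positivity
    have h1 : cfun (m + 1) = cfun m * (((m : ℝ) + 3 / 2) / ((m : ℝ) + 1)) := cfun_succ m
    have h2 : ((m : ℝ) + 3 / 2) / ((m : ℝ) + 1) ≤ 3 / 2 := by
      rw [div_le_iff₀ hm1]; nlinarith
    have h3 : f (m + 1) = f m * ((((m : ℝ) + 3 / 2) / ((m : ℝ) + 1)) / r) := by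
      rw [hf_def]; simp only
      rw [h1, pow_succ, mul_div_mul_comm]
    rw [h3]
    apply mul_le_mul_of_nonneg_left _ (le_of_lt (hf_pos m))
    rw [div_le_iff₀ hr0]
    calc ((m : ℝ) + 3 / 2) / ((m : ℝ) + 1) ≤ 3 / 2 := h2
      _ ≤ 1 / 16 * r := by nlinarith
  have hgeo : ∀ j : ℕ, f (j + k) ≤ f k * (1 / 16 : ℝ) ^ j := by
    intro j
    induction j with
    | zero => simp
    | succ j ih =>
      have : f (j + 1 + k) = f ((j + k) + 1) := by ring_nf
      rw [this]
      calc f ((j + k) + 1) ≤ f (j + k) * (1 / 16) := hstep _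
        _ ≤ f k * (1 / 16 : ℝ) ^ j * (1 / 16) := by
            apply mul_le_mul_of_nonneg_right ih; norm_num
        _ = f k * (1 / 16 : ℝ) ^ (j + 1) := by ring
  have hsum_geo : Summable (fun j : ℕ => f k * (1 / 16 : ℝ) ^ j) :=
    (summable_geometric_of_lt_one (by norm_num) (by norm_num)).mul_left _
  have hsum : Summable (fun j : ℕ => f (j + k)) :=
    Summable.of_nonneg_of_le (fun j => le_of_lt (hf_pos _)) hgeo hsum_geo
  constructor
  · exact Summable.tsum_pos hsum (fun j => le_of_lt (hf_pos _)) 0 (hf_pos _)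
  · have hle : (∑' j : ℕ, f (j + k)) ≤ f k * (16 / 15) := by
      calc (∑' j : ℕ, f (j + k)) ≤ ∑' j : ℕ, f k * (1 / 16 : ℝ) ^ j :=
            Summable.tsum_le_tsum hgeo hsum hsum_geo
        _ = f k * (16 / 15) := by
            rw [tsum_mul_left, tsum_geometric_of_lt_one (by norm_num) (by norm_num)]
            norm_num
    have hs3 : (1 : ℝ) ≤ Real.sqrt 3 := by
      rw [show (1 : ℝ) = Real.sqrt 1 by simp]
      exact Real.sqrt_le_sqrt (by norm_num)
    have hs2 : (1.4 : ℝ) ≤ Real.sqrt 2 := by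
      rw [show (1.4 : ℝ) = Real.sqrt (1.4 ^ 2) by rw [Real.sqrt_sq]; norm_num]
      exact Real.sqrt_le_sqrt (by norm_num)
    have hsk : (0 : ℝ) < Real.sqrt ((k : ℝ) + 1) := Real.sqrt_pos.mpr (by positivity)
    have hck : cfun k ≤ 2 * Real.sqrt ((k : ℝ) + 1) := by
      calc cfun k ≤ 2 / Real.sqrt 3 * Real.sqrt ((k : ℝ) + 3 / 4) := cfun_le k
        _ ≤ 2 / 1 * Real.sqrt ((k : ℝ) + 1) := by
            apply mul_le_mul _ (Real.sqrt_le_sqrt (by norm_num)) (Real.sqrt_nonneg _) (by norm_num)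
            apply div_le_div_of_nonneg_left (by norm_num) (by norm_num) hs3
        _ = 2 * Real.sqrt ((k : ℝ) + 1) := by norm_num
    have hrk : (0 : ℝ) < r ^ k := pow_pos hr0 k
    calc (∑' j : ℕ, f (j + k)) ≤ f k * (16 / 15) := hle
      _ = cfun k * (16 / 15) / r ^ k := by rw [hf_def]; ring
      _ ≤ 2 * Real.sqrt ((k : ℝ) + 1) * (16 / 15) / r ^ k := by
          apply div_le_div_of_nonneg_right _ hrk.le
          nlinarith
      _ < 4 * Real.sqrt 2 * (Real.sqrt ((k : ℝ) + 1) / r ^ k) := by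
          have h32 : (2 : ℝ) * (16 / 15) < 4 * Real.sqrt 2 := by nlinarith
          rw [div_lt_iff₀ hrk]
          have hrw : 4 * Real.sqrt 2 * (Real.sqrt ((k : ℝ) + 1) / r ^ k) * r ^ k
              = (4 * Real.sqrt 2) * Real.sqrt ((k : ℝ) + 1) := by field_simp
          rw [hrw]
          nlinarith [mul_lt_mul_of_pos_right h32 hsk]
end

section
/- For every positive integer $n$, $1 - \frac{1}{4\sqrt{n}} < e^{-\frac{\pi}{12}\sqrt{\frac{2}{3n}}} < e^{\pi\sqrt{\frac{2n}{3}}\left(\sqrt{1-\frac{1}{24n}}-1\right)} < 1$. -/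
open Real

theorem stmt14 (n : ℕ) (hn : 1 ≤ n) :
    1 - 1 / (4 * Real.sqrt n) < Real.exp (-(π / 12) * Real.sqrt (2 / (3 * n))) ∧
    Real.exp (-(π / 12) * Real.sqrt (2 / (3 * n))) <
      Real.exp (π * Real.sqrt (2 * n / 3) * (Real.sqrt (1 - 1 / (24 * n)) - 1)) ∧
    Real.exp (π * Real.sqrt (2 * n / 3) * (Real.sqrt (1 - 1 / (24 * n)) - 1)) < 1 := by
  have hn1 : (1:ℝ) ≤ (n:ℝ) := by exact_mod_cast hn
  have hn0 : (0:ℝ) < (n:ℝ) := by linarith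
  have hc0 : 0 < Real.sqrt (2 / (3 * n)) := Real.sqrt_pos.2 (by positivity)
  set c := Real.sqrt (2 / (3 * n)) with hc
  have hc2 : c ^ 2 = 2 / (3 * n) := Real.sq_sqrt (by positivity)
  have hs0 : 0 < Real.sqrt n := Real.sqrt_pos.2 hn0
  have hs2 : (Real.sqrt n) ^ 2 = n := Real.sq_sqrt (le_of_lt hn0)
  have hpi := Real.pi_pos
  have hpilt : π < 3.15 := by
    have := Real.pi_lt_d2
    linarith
  have ht0 : (0:ℝ) < 1 / (n:ℝ) := by positivity
  have ht1 : 1 / (n:ℝ) ≤ 1 := by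
    rw [div_le_one hn0]; exact hn1
  have e24 : 1 / (24 * (n:ℝ)) = (1 / (n:ℝ)) / 24 := by ring
  have e12 : 1 / (12 * (n:ℝ)) = (1 / (n:ℝ)) / 12 := by ring
  -- sqrt(2n/3) = n * c
  have hnc : Real.sqrt (2 * n / 3) = n * c := by
    rw [show (2 * (n:ℝ) / 3) = (n:ℝ)^2 * (2 / (3 * n)) by field_simp]
    rw [Real.sqrt_mul (by positivity), Real.sqrt_sq (le_of_lt hn0)]
  have hx0 : 0 < 1 - 1 / (24 * (n:ℝ)) := by rw [e24]; linarith
  have hr1 : Real.sqrt (1 - 1 / (24 * n)) < 1 := by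
    have h := Real.sqrt_lt_sqrt (le_of_lt hx0)
      (show 1 - 1 / (24 * (n:ℝ)) < 1 by rw [e24]; linarith)
    simpa using h
  refine ⟨?_, ?_, ?_⟩
  · -- first inequality
    have h1 : -(π / 12) * c + 1 < Real.exp (-(π / 12) * c) :=
      Real.add_one_lt_exp (by nlinarith)
    have h2 : π / 12 * c < 1 / (4 * Real.sqrt n) := by
      have hb : 0 < 1 / (4 * Real.sqrt n) := by positivity
      have hsq : (π / 12 * c) ^ 2 < (1 / (4 * Real.sqrt n)) ^ 2 := by
        have e1 : (π / 12 * c) ^ 2 = π ^ 2 * 2 / (144 * (3 * n)) := by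
          rw [mul_pow, hc2]; ring
        have e2 : (1 / (4 * Real.sqrt n)) ^ 2 = 1 / (16 * n) := by
          rw [div_pow, mul_pow, hs2]; norm_num
        rw [e1, e2, div_lt_div_iff₀ (by positivity) (by positivity)]
        have hpi2 : π ^ 2 < 9.9225 := by nlinarith
        nlinarith [mul_lt_mul_of_pos_right hpi2 hn0]
      exact lt_of_pow_lt_pow_left₀ 2 (le_of_lt hb) hsq
    linarith
  · -- second inequality
    apply Real.exp_lt_exp.2
    rw [hnc]
    have key : 1 - 1 / (12 * (n:ℝ)) < Real.sqrt (1 - 1 / (24 * n)) := by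
      rw [show (1:ℝ) - 1 / (12 * (n:ℝ)) = Real.sqrt ((1 - 1 / (12 * n))^2) by
        rw [Real.sqrt_sq]; rw [e12]; nlinarith]
      apply Real.sqrt_lt_sqrt (by positivity)
      rw [e12, e24]
      nlinarith
    have hstep : -(1 / 12 : ℝ) < (n:ℝ) * (Real.sqrt (1 - 1 / (24 * n)) - 1) := by
      have hm := mul_lt_mul_of_pos_left key hn0
      have hinv : (n:ℝ) * (1 - 1 / (12 * (n:ℝ))) = n - 1 / 12 := by
        field_simp
      have hexp : (n:ℝ) * (Real.sqrt (1 - 1 / (24 * n)) - 1)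
          = (n:ℝ) * Real.sqrt (1 - 1 / (24 * n)) - n := by ring
      linarith
    calc -(π / 12) * c = π * c * (-(1/12)) := by ring
      _ < π * c * ((n:ℝ) * (Real.sqrt (1 - 1 / (24 * n)) - 1)) := by
          apply mul_lt_mul_of_pos_left hstep (by positivity)
      _ = π * (n * c) * (Real.sqrt (1 - 1 / (24 * n)) - 1) := by ring
  · -- third inequality
    apply Real.exp_lt_one_iff.2
    have h2 : 0 < Real.sqrt (2 * n / 3) := Real.sqrt_pos.2 (by positivity)
    have h3 : Real.sqrt (1 - 1 / (24 * n)) - 1 < 0 := by linarith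
    exact mul_neg_of_pos_of_neg (by positivity) h3
end

section
/- For all positive integers $n$ and $k$ with $n > \frac{k+2}{24}$, $1 < \left(1 - \frac{1}{24n}\right)^{-\frac{k+2}{2}} < 1 + \frac{k}{3n}$. -/
/-!
Write `ε = 1/(24n)` and `p = (k+2)/2`. The lower bound holds because `1 - ε < 1` and `-p < 0`.
For the upper bound, Bernoulli's inequality `(1 - ε)^p ≥ 1 - pε` gives `(1 - ε)^(-p) ≤ 1/(1 - pε)`,
and `pε = (k+2)/(48n) < 1/2`; clearing denominators, `1/(1 - pε) < 1 + k/(3n)` reduces to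
`k(k+2)/(3n) < 15k - 2`, which follows from `k + 2 < 24n` and `k ≥ 1`.
-/

theorem Real.rpow_neg_one_sub_le_inv {ε p : ℝ} (hε : ε ≤ 1) (hp : 1 ≤ p) (hpε : p * ε < 1) :
    (1 - ε) ^ (-p) ≤ (1 - p * ε)⁻¹ := by
  have bernoulli : 1 - p * ε ≤ (1 - ε) ^ p := by
    simpa [sub_eq_add_neg] using one_add_mul_self_le_rpow_one_add (s := -ε) (by linarith) hp
  rw [Real.rpow_neg (by linarith)]
  exact inv_anti₀ (by linarith) bernoulli

theorem inv_one_sub_div_lt_one_add_div {n k : ℝ} (hk : 1 ≤ k) (hkn : k + 2 < 24 * n) :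
    (1 - (k + 2) / (48 * n))⁻¹ < 1 + k / (3 * n) := by
  have hn : 0 < n := by linarith
  have hpos : 0 < 1 - (k + 2) / (48 * n) := by
    rw [sub_pos, div_lt_one (by positivity)]
    linarith
  rw [inv_lt_iff_one_lt_mul₀ hpos]
  field_simp
  nlinarith [mul_pos hn hn]

theorem stmt15_general (n k : ℕ) (hk : 1 ≤ k) (h : (n : ℝ) > ((k : ℝ) + 2) / 24) :
    1 < (1 - 1 / (24 * (n : ℝ))) ^ (-(((k : ℝ) + 2) / 2)) ∧
    (1 - 1 / (24 * (n : ℝ))) ^ (-(((k : ℝ) + 2) / 2)) < 1 + (k : ℝ) / (3 * n) := by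
  have hk1 : (1 : ℝ) ≤ k := by exact_mod_cast hk
  have hkn : (k : ℝ) + 2 < 24 * n := by linarith
  have hn : (0 : ℝ) < n := by linarith
  have hε : 0 < 1 / (24 * (n : ℝ)) := by positivity
  have hε1 : 1 / (24 * (n : ℝ)) < 1 := by rw [div_lt_one (by positivity)]; linarith
  have hpε : ((k : ℝ) + 2) / 2 * (1 / (24 * n)) = ((k : ℝ) + 2) / (48 * n) := by
    field_simp; ring
  constructor
  · exact Real.one_lt_rpow_of_pos_of_lt_one_of_neg (by linarith) (by linarith) (by linarith)
  · calc (1 - 1 / (24 * (n : ℝ))) ^ (-(((k : ℝ) + 2) / 2))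
        ≤ (1 - ((k : ℝ) + 2) / 2 * (1 / (24 * n)))⁻¹ :=
          Real.rpow_neg_one_sub_le_inv hε1.le (by linarith) <| by
            rw [hpε, div_lt_one (by positivity)]; linarith
      _ = (1 - ((k : ℝ) + 2) / (48 * n))⁻¹ := by rw [hpε]
      _ < 1 + (k : ℝ) / (3 * n) := inv_one_sub_div_lt_one_add_div hk1 hkn

theorem stmt15 (n k : ℕ) (hn : 1 ≤ n) (hk : 1 ≤ k) (h : (n : ℝ) > ((k : ℝ) + 2) / 24) :
    1 < (1 - 1 / (24 * (n : ℝ))) ^ (-(((k : ℝ) + 2) / 2)) ∧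
    (1 - 1 / (24 * (n : ℝ))) ^ (-(((k : ℝ) + 2) / 2)) < 1 + (k : ℝ) / (3 * n) :=
  stmt15_general n k hk h
end

section
/- Let $\mu(n) = \frac{\pi}{6}\sqrt{24n-1}$ and for $k \ge 1$ set $\widehat{L}_2(k) = \frac{1}{(\pi/6)^k\sqrt{24}^k}\left(1-\frac{1}{4\sqrt{n}}\right)$ and $\widehat{U}_2(k) = \frac{1}{(\pi/6)^k\sqrt{24}^k}\left(1+\frac{k}{3n}\right)$. Then for all integers $k \ge 1$ and real integers $n > \frac{k+2}{24}$, $\frac{e^{\pi\sqrt{2n/3}}}{4n\sqrt{3}}\cdot\frac{\widehat{L}_2(k)}{n^{k/2}} < \frac{\sqrt{12}\,e^{\mu(n)}}{24n-1}\cdot\frac{1}{\mu(n)^k} < \frac{e^{\pi\sqrt{2n/3}}}{4n\sqrt{3}}\cdot\frac{\widehat{U}_2(k)}{n^{k/2}}$. -/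
open Real

set_option maxHeartbeats 1000000 in
theorem stmt19 (n k : ℕ) (hn : 1 ≤ n) (hk : 1 ≤ k) (h : (n : ℝ) > ((k : ℝ) + 2) / 24) :
    Real.exp (π * Real.sqrt (2 * n / 3)) / (4 * n * Real.sqrt 3) *
        (1 / ((π / 6) ^ k * Real.sqrt 24 ^ k) * (1 - 1 / (4 * Real.sqrt n)) /
          Real.sqrt n ^ k) <
      Real.sqrt 12 * Real.exp (π / 6 * Real.sqrt (24 * n - 1)) / (24 * n - 1) *
        (1 / (π / 6 * Real.sqrt (24 * n - 1)) ^ k) ∧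
    Real.sqrt 12 * Real.exp (π / 6 * Real.sqrt (24 * n - 1)) / (24 * n - 1) *
        (1 / (π / 6 * Real.sqrt (24 * n - 1)) ^ k) <
      Real.exp (π * Real.sqrt (2 * n / 3)) / (4 * n * Real.sqrt 3) *
        (1 / ((π / 6) ^ k * Real.sqrt 24 ^ k) * (1 + (k : ℝ) / (3 * n)) /
          Real.sqrt n ^ k) := by
  have hn1 : (1:ℝ) ≤ (n:ℝ) := by exact_mod_cast hn
  have hk1 : (1:ℝ) ≤ (k:ℝ) := by exact_mod_cast hk
  have hnpos : (0:ℝ) < n := by linarith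
  have hky : (k:ℝ) + 2 ≤ 24 * (n:ℝ) - 1 := by
    have h1 : (k:ℝ) + 2 < 24 * n := by nlinarith
    have h2 : k + 2 < 24 * n := by exact_mod_cast h1
    have h3 : k + 3 ≤ 24 * n := h2
    have h4 : ((k:ℝ)) + 3 ≤ 24 * n := by exact_mod_cast h3
    linarith
  set Y : ℝ := 24 * (n:ℝ) - 1 with hY
  have hypos : (0:ℝ) < Y := by rw [hY]; linarith
  set c : ℝ := π / 6 with hc
  have hcpos : 0 < c := by rw [hc]; positivity
  have hc1 : c < 1 := by
    have := Real.pi_lt_d2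
    rw [hc]; linarith
  set sn := Real.sqrt n with hsn
  set sx := Real.sqrt (24 * n) with hsx
  set sy := Real.sqrt Y with hsy
  have hxpos : (0:ℝ) < 24 * n := by linarith
  have hsn1 : 1 ≤ sn := by
    rw [hsn, show (1:ℝ) = Real.sqrt 1 by simp]
    exact Real.sqrt_le_sqrt hn1
  have hsnpos : 0 < sn := lt_of_lt_of_le one_pos hsn1
  have hsypos : 0 < sy := Real.sqrt_pos.mpr hypos
  have hsy2 : sy ^ 2 = Y := Real.sq_sqrt hypos.le
  have hsx2 : sx ^ 2 = 24 * n := Real.sq_sqrt hxpos.le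
  have hsxpos : 0 < sx := Real.sqrt_pos.mpr hxpos
  have hsyx : sy < sx := by
    rw [hsy, hsx]
    exact Real.sqrt_lt_sqrt hypos.le (by rw [hY]; linarith)
  have hsx4 : 4 * sn ≤ sx := by
    rw [hsx, hsn, Real.sqrt_mul (by norm_num : (0:ℝ) ≤ 24)]
    have h24 : (4:ℝ) ≤ Real.sqrt 24 := by
      rw [show (4:ℝ) = Real.sqrt 16 by
        rw [show (16:ℝ) = 4^2 by norm_num, Real.sqrt_sq]; norm_num]
      exact Real.sqrt_le_sqrt (by norm_num)
    nlinarith [Real.sqrt_nonneg (n:ℝ)]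
  -- δ relation
  have hdelta : (sx - sy) * (sx + sy) = 1 := by
    have : sx^2 - sy^2 = 1 := by rw [hsx2, hsy2, hY]; ring
    nlinarith [this]
  have hdpos : 0 < sx - sy := by linarith
  have hcd : c * (sx - sy) < 1 / (4 * sn) := by
    rw [lt_div_iff₀ (by positivity)]
    -- c*(sx-sy)*(4*sn) < 1 = (sx-sy)*(sx+sy)
    have h1 : c * (4 * sn) < sx + sy := by nlinarith
    nlinarith
  have key1 : (1 - 1 / (4 * sn)) * Real.exp (c * (sx - sy)) < 1 := by
    have ht : 0 < c * (sx - sy) := mul_pos hcpos hdpos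
    have he : 1 - c * (sx - sy) < Real.exp (-(c * (sx - sy))) := by
      have hne : -(c * (sx - sy)) ≠ 0 := ne_of_lt (by linarith)
      have := Real.add_one_lt_exp hne
      linarith
    have hq : 1 - 1 / (4 * sn) < Real.exp (-(c * (sx - sy))) := by
      have : 1 - 1 / (4 * sn) ≤ 1 - c * (sx - sy) := by linarith
      linarith
    have hmul := mul_lt_mul_of_pos_right hq (Real.exp_pos (c * (sx - sy)))
    rwa [← Real.exp_add, neg_add_cancel, Real.exp_zero] at hmul
  have hsplit : Real.exp (c * sx) = Real.exp (c * sy) * Real.exp (c * (sx - sy)) := by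
    rw [← Real.exp_add]; congr 1; ring
  have KL : Real.exp (c * sx) * (1 - 1 / (4 * sn)) * (Y * sy ^ k)
      < 24 * n * Real.exp (c * sy) * sx ^ k := by
    calc Real.exp (c * sx) * (1 - 1 / (4 * sn)) * (Y * sy ^ k)
        = ((1 - 1 / (4 * sn)) * Real.exp (c * (sx - sy))) *
            (Real.exp (c * sy) * (Y * sy ^ k)) := by rw [hsplit]; ring
      _ < 1 * (Real.exp (c * sy) * (Y * sy ^ k)) :=
          mul_lt_mul_of_pos_right key1 (by positivity)
      _ = Real.exp (c * sy) * (Y * sy ^ k) := by ring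
      _ ≤ Real.exp (c * sy) * ((24 * n) * sx ^ k) := by
          have h1 : sy ^ k ≤ sx ^ k := pow_le_pow_left₀ hsypos.le hsyx.le k
          have h2 : Y ≤ 24 * (n:ℝ) := by rw [hY]; linarith
          have h4 : Y * sy ^ k ≤ 24 * (n:ℝ) * sx ^ k :=
            mul_le_mul h2 h1 (pow_pos hsypos k).le (by linarith)
          exact mul_le_mul_of_nonneg_left h4 (Real.exp_pos _).le
      _ = 24 * n * Real.exp (c * sy) * sx ^ k := by ring
  -- upper bound preparation
  set E := Real.exp (1 / (2 * Y)) with hE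
  have hE1 : 2 * Y + 1 ≤ 2 * Y * E := by
    have h1 : (1:ℝ) / (2 * Y) + 1 ≤ E := Real.add_one_le_exp (1 / (2 * Y))
    have heq : 2 * Y * (1 / (2 * Y) + 1) = 2 * Y + 1 := by field_simp; ring
    calc 2 * Y + 1 = 2 * Y * (1 / (2 * Y) + 1) := heq.symm
      _ ≤ 2 * Y * E := mul_le_mul_of_nonneg_left h1 (by positivity)
  have hsq : sx * (2 * Y) ≤ (2 * Y + 1) * sy := by
    have h2 : (sx * (2 * Y)) ^ 2 ≤ ((2 * Y + 1) * sy) ^ 2 := by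
      have e1 : (sx * (2 * Y)) ^ 2 = (24 * n) * (4 * Y ^ 2) := by
        rw [mul_pow, hsx2]; ring
      have e2 : ((2 * Y + 1) * sy) ^ 2 = (2 * Y + 1) ^ 2 * Y := by
        rw [mul_pow, hsy2]
      rw [e1, e2, hY]; nlinarith
    have h3 := Real.sqrt_le_sqrt h2
    rwa [Real.sqrt_sq (by positivity), Real.sqrt_sq (by positivity)] at h3
  have hsxE : sx ≤ sy * E := by
    have h4 : sx * (2 * Y) ≤ (sy * E) * (2 * Y) := by nlinarith
    exact le_of_mul_le_mul_right h4 (by positivity)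
  have hpowk : sx ^ k ≤ (sy * E) ^ k := pow_le_pow_left₀ hsxpos.le hsxE k
  have hx2 : sx ^ 2 ≤ (sy * E) ^ 2 := pow_le_pow_left₀ hsxpos.le hsxE 2
  have hEk : E ^ (k + 2) = Real.exp (((k:ℝ) + 2) / (2 * Y)) := by
    rw [hE, ← Real.exp_nat_mul]
    congr 1
    push_cast
    ring
  have hEbound : Real.exp (((k:ℝ) + 2) / (2 * Y)) ≤ 1 + ((k:ℝ) + 2) / Y := by
    set t := ((k:ℝ) + 2) / (2 * Y) with hT
    have ht0 : 0 < t := by rw [hT]; positivity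
    have ht12 : t ≤ 1 / 2 := by
      rw [hT, div_le_div_iff₀ (by positivity) (by norm_num)]
      linarith
    have hA : Real.exp t * (1 - t) ≤ 1 := by
      have h5 : 1 - t ≤ Real.exp (-t) := by
        have := Real.add_one_le_exp (-t)
        linarith
      calc Real.exp t * (1 - t) ≤ Real.exp t * Real.exp (-t) :=
            mul_le_mul_of_nonneg_left h5 (Real.exp_pos t).le
        _ = 1 := by rw [← Real.exp_add]; simp
    have h6 : Real.exp t ≤ 1 + 2 * t := by
      have h7 : Real.exp t ≤ 1 / (1 - t) := by
        rw [le_div_iff₀ (by linarith)]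
        exact hA
      have h8 : 1 / (1 - t) ≤ 1 + 2 * t := by
        rw [div_le_iff₀ (by linarith)]
        nlinarith
      linarith
    have h9 : 2 * t = ((k:ℝ) + 2) / Y := by rw [hT]; field_simp
    linarith
  have hfrac : (k:ℝ) + 2 ≤ (k:ℝ) / (3 * n) * Y := by
    rw [div_mul_eq_mul_div, le_div_iff₀ (by positivity)]
    rw [hY]
    nlinarith [mul_nonneg (by linarith : (0:ℝ) ≤ 6 * (n:ℝ)) (by linarith : (0:ℝ) ≤ (k:ℝ) - 1),
      mul_nonneg (by linarith : (0:ℝ) ≤ (k:ℝ)) (by linarith : (0:ℝ) ≤ 15 * (n:ℝ) - 1)]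
  have main : 24 * (n:ℝ) * sx ^ k ≤ (1 + (k:ℝ) / (3 * n)) * (Y * sy ^ k) := by
    calc 24 * (n:ℝ) * sx ^ k = sx ^ 2 * sx ^ k := by rw [hsx2]
      _ ≤ (sy * E) ^ 2 * (sy * E) ^ k :=
          mul_le_mul hx2 hpowk (by positivity) (by positivity)
      _ = (sy ^ 2 * sy ^ k) * E ^ (k + 2) := by ring
      _ = Y * sy ^ k * Real.exp (((k:ℝ) + 2) / (2 * Y)) := by rw [hsy2, hEk]
      _ ≤ Y * sy ^ k * (1 + ((k:ℝ) + 2) / Y) :=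
          mul_le_mul_of_nonneg_left hEbound (by positivity)
      _ = Y * sy ^ k + ((k:ℝ) + 2) * sy ^ k := by field_simp
      _ ≤ Y * sy ^ k + ((k:ℝ) / (3 * n) * Y) * sy ^ k := by
          have := mul_le_mul_of_nonneg_right hfrac (by positivity : (0:ℝ) ≤ sy ^ k)
          linarith
      _ = (1 + (k:ℝ) / (3 * n)) * (Y * sy ^ k) := by ring
  have hE2 : 1 < Real.exp (c * (sx - sy)) := by
    rw [show (1:ℝ) = Real.exp 0 by simp]
    exact Real.exp_lt_exp.mpr (mul_pos hcpos hdpos)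
  have KU : 24 * (n:ℝ) * Real.exp (c * sy) * sx ^ k
      < Real.exp (c * sx) * (1 + (k:ℝ) / (3 * n)) * (Y * sy ^ k) := by
    calc 24 * (n:ℝ) * Real.exp (c * sy) * sx ^ k
        = Real.exp (c * sy) * (24 * n * sx ^ k) := by ring
      _ ≤ Real.exp (c * sy) * ((1 + (k:ℝ) / (3 * n)) * (Y * sy ^ k)) :=
          mul_le_mul_of_nonneg_left main (Real.exp_pos _).le
      _ < (Real.exp (c * sy) * Real.exp (c * (sx - sy))) *
            ((1 + (k:ℝ) / (3 * n)) * (Y * sy ^ k)) := by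
          have hp : 0 < (1 + (k:ℝ) / (3 * n)) * (Y * sy ^ k) := by positivity
          exact mul_lt_mul_of_pos_right
            (lt_mul_of_one_lt_right (Real.exp_pos (c * sy)) hE2) hp
      _ = Real.exp (c * sx) * ((1 + (k:ℝ) / (3 * n)) * (Y * sy ^ k)) := by
          rw [← Real.exp_add, show c * sy + c * (sx - sy) = c * sx by ring]
      _ = Real.exp (c * sx) * (1 + (k:ℝ) / (3 * n)) * (Y * sy ^ k) := by ring
  -- assembly
  have hsqrt23 : π * Real.sqrt (2 * (n:ℝ) / 3) = c * sx := by
    have h1 : Real.sqrt (2 * (n:ℝ) / 3) = sx / 6 := by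
      rw [hsx, show 2 * (n:ℝ) / 3 = (24 * n) * (1/6)^2 by ring,
        Real.sqrt_mul hxpos.le, Real.sqrt_sq (by norm_num : (0:ℝ) ≤ 1/6)]
      ring
    rw [h1, hc]; ring
  have h24k : Real.sqrt 24 ^ k * sn ^ k = sx ^ k := by
    rw [← mul_pow, hsx, hsn, ← Real.sqrt_mul (by norm_num : (0:ℝ) ≤ 24)]
  have h123 : Real.sqrt 12 * Real.sqrt 3 = 6 := by
    rw [← Real.sqrt_mul (by norm_num : (0:ℝ) ≤ 12),
      show (12:ℝ) * 3 = 6^2 by norm_num]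
    exact Real.sqrt_sq (by norm_num)
  have hP : 0 < c ^ k := pow_pos hcpos k
  have hn0 : (n:ℝ) ≠ 0 := ne_of_gt hnpos
  have hsn0 : sn ≠ 0 := ne_of_gt hsnpos
  have hsy0 : sy ≠ 0 := ne_of_gt hsypos
  have hY0 : Y ≠ 0 := ne_of_gt hypos
  have hc0 : c ≠ 0 := ne_of_gt hcpos
  have hs30 : Real.sqrt 3 ≠ 0 := by positivity
  have hs240 : Real.sqrt 24 ≠ 0 := by positivity
  have hd1 : (0:ℝ) < 4 * n * Real.sqrt 3 * (c ^ k * sx ^ k) := by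
    have h3 : (0:ℝ) < Real.sqrt 3 := Real.sqrt_pos.mpr (by norm_num)
    have := mul_pos (mul_pos (mul_pos (by norm_num : (0:ℝ) < 4) hnpos) h3)
      (mul_pos hP (pow_pos hsxpos k))
    linarith [this]
  have hd2 : (0:ℝ) < Y * (c ^ k * sy ^ k) :=
    mul_pos hypos (mul_pos hP (pow_pos hsypos k))
  have eL1 : Real.exp (c * sx) / (4 * n * Real.sqrt 3) *
        (1 / (c ^ k * Real.sqrt 24 ^ k) * (1 - 1 / (4 * sn)) / sn ^ k)
      = (Real.exp (c * sx) * (1 - 1 / (4 * sn))) /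
          (4 * n * Real.sqrt 3 * (c ^ k * sx ^ k)) := by
    rw [← h24k]
    field_simp
    try ring
    try ring_nf
    try tauto
  have eL2 : Real.exp (c * sx) / (4 * n * Real.sqrt 3) *
        (1 / (c ^ k * Real.sqrt 24 ^ k) * (1 + (k:ℝ) / (3 * n)) / sn ^ k)
      = (Real.exp (c * sx) * (1 + (k:ℝ) / (3 * n))) /
          (4 * n * Real.sqrt 3 * (c ^ k * sx ^ k)) := by
    rw [← h24k]
    field_simp
    try ring
    try ring_nf
    try tauto
  have eM : Real.sqrt 12 * Real.exp (c * sy) / Y * (1 / (c * sy) ^ k)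
      = (Real.sqrt 12 * Real.exp (c * sy)) / (Y * (c ^ k * sy ^ k)) := by
    rw [mul_pow]
    field_simp
  rw [hsqrt23]
  constructor
  · rw [eL1, eM, div_lt_div_iff₀ hd1 hd2]
    calc Real.exp (c * sx) * (1 - 1 / (4 * sn)) * (Y * (c ^ k * sy ^ k))
        = (Real.exp (c * sx) * (1 - 1 / (4 * sn)) * (Y * sy ^ k)) * c ^ k := by ring
      _ < (24 * n * Real.exp (c * sy) * sx ^ k) * c ^ k :=
          mul_lt_mul_of_pos_right KL hP
      _ = Real.sqrt 12 * Real.exp (c * sy) *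
            (4 * n * Real.sqrt 3 * (c ^ k * sx ^ k)) := by
          linear_combination (-(4 * (n:ℝ) * Real.exp (c * sy) * c ^ k * sx ^ k)) * h123
  · rw [eL2, eM, div_lt_div_iff₀ hd2 hd1]
    calc Real.sqrt 12 * Real.exp (c * sy) * (4 * n * Real.sqrt 3 * (c ^ k * sx ^ k))
        = (24 * n * Real.exp (c * sy) * sx ^ k) * c ^ k := by
          linear_combination (4 * (n:ℝ) * Real.exp (c * sy) * c ^ k * sx ^ k) * h123
      _ < (Real.exp (c * sx) * (1 + (k:ℝ) / (3 * n)) * (Y * sy ^ k)) * c ^ k :=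
          mul_lt_mul_of_pos_right KU hP
      _ = Real.exp (c * sx) * (1 + (k:ℝ) / (3 * n)) * (Y * (c ^ k * sy ^ k)) := by ring
end
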